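/- arXiv:2106.01926 — 3 statements merged into one kernel-verified Lean document; each statement's English description precedes it below -/
import Mathlib

section
/- If S is skew-symmetric, i.e. Sᵀ = −S, then H(σ(h)) = H(σ(0)). -/
/-! The right-hand side extends `c ↦ σ(ch)` to a smooth curve
`F c = σ(0) + h ∑ⱼ (∫₀ᶜ Pⱼ) S βⱼ` on all of `ℝ`. By the chain rule,
`d/dc H(F c) = h ∑ⱼ Pⱼ(c) ∇H(F c) ⬝ S βⱼ`, and integrating over `[0, 1]` turns
`∫₀¹ Pⱼ(c) ∇H(F c) dc` back into `βⱼ`. Hence `H(σ(h)) - H(σ(0)) = h ∑ⱼ βⱼ ⬝ S βⱼ`,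
and every term vanishes because `S` is skew-symmetric. -/

open Matrix

section

variable {n : Type*} [Fintype n]

theorem dotProduct_mulVec_self_eq_zero_of_transpose_eq_neg {R : Type*} [CommRing R]
    [NoZeroDivisors R] [CharZero R] {S : Matrix n n R} (hS : Sᵀ = -S) (x : n → R) :
    x ⬝ᵥ S *ᵥ x = 0 := by
  refine self_eq_neg.mp ?_
  calc x ⬝ᵥ S *ᵥ x = Sᵀ *ᵥ x ⬝ᵥ x := by rw [dotProduct_mulVec, mulVec_transpose]
    _ = -(x ⬝ᵥ S *ᵥ x) := by rw [hS, neg_mulVec, neg_dotProduct, dotProduct_comm]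

theorem sum_smul_proj_apply {𝕜 : Type*} [NormedField 𝕜] (v x : n → 𝕜) :
    (∑ i, v i • (ContinuousLinearMap.proj i : (n → 𝕜) →L[𝕜] 𝕜)) x = v ⬝ᵥ x := by
  simp [dotProduct]

theorem intervalIntegral_dotProduct_const {f : ℝ → n → ℝ} {a b : ℝ}
    (hf : IntervalIntegrable f MeasureTheory.volume a b) (w : n → ℝ) :
    ∫ x in a..b, f x ⬝ᵥ w = (∫ x in a..b, f x) ⬝ᵥ w := by
  simpa only [sum_smul_proj_apply, dotProduct_comm w] using
    (∑ i, w i • (ContinuousLinearMap.proj i : (n → ℝ) →L[ℝ] ℝ)).intervalIntegral_comp_comm hf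

variable {H : (n → ℝ) → ℝ} {g : (n → ℝ) → n → ℝ}

theorem continuous_of_hasFDerivAt_sum_smul_proj (hH : ContDiff ℝ 1 H)
    (hg : ∀ x, HasFDerivAt H (∑ i, g x i • (ContinuousLinearMap.proj i : (n → ℝ) →L[ℝ] ℝ)) x) :
    Continuous g := by
  classical
  have hg_fderiv : ∀ i, (fun x => g x i) = fun x => fderiv ℝ H x (Pi.single i 1) := fun i =>
    funext fun x => by rw [(hg x).fderiv, sum_smul_proj_apply, dotProduct_single_one]
  refine continuous_pi fun i => ?_
  rw [hg_fderiv]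
  exact (hH.continuous_fderiv one_ne_zero).clm_apply continuous_const

theorem hasDerivAt_sum_integral_smul {E ι : Type*} [NormedAddCommGroup E] [NormedSpace ℝ E]
    (t : Finset ι) {p : ι → ℝ → ℝ} (hp : ∀ j, Continuous (p j)) (w : ι → E) (c : ℝ) :
    HasDerivAt (fun c => ∑ j ∈ t, (∫ x in (0:ℝ)..c, p j x) • w j) (∑ j ∈ t, p j c • w j) c :=
  HasDerivAt.fun_sum fun j _ => ((hp j).integral_hasStrictDerivAt 0 c).hasDerivAt.smul_const (w j)

theorem apply_sub_apply_eq_sum_integral_dotProduct {ι : Type*} (t : Finset ι) {p : ι → ℝ → ℝ}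
    (hp : ∀ j, Continuous (p j)) (hH : ContDiff ℝ 1 H)
    (hg : ∀ x, HasFDerivAt H (∑ i, g x i • (ContinuousLinearMap.proj i : (n → ℝ) →L[ℝ] ℝ)) x)
    (a : n → ℝ) (h : ℝ) (w : ι → n → ℝ) :
    let F := fun c : ℝ => a + h • ∑ j ∈ t, (∫ x in (0:ℝ)..c, p j x) • w j
    H (F 1) - H (F 0) = h * ∑ j ∈ t, (∫ c in (0:ℝ)..1, p j c • g (F c)) ⬝ᵥ w j := by
  intro F
  have hF : ∀ c, HasDerivAt F (h • ∑ j ∈ t, p j c • w j) c := fun c =>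
    ((hasDerivAt_sum_integral_smul t hp w c).const_smul h).const_add a
  have hF_cont : Continuous F := continuous_iff_continuousAt.mpr fun c => (hF c).continuousAt
  have hφ : ∀ j, Continuous fun c => p j c • g (F c) := fun j =>
    (hp j).smul ((continuous_of_hasFDerivAt_sum_smul_proj hH hg).comp hF_cont)
  have hφw : ∀ j, Continuous fun c => (p j c • g (F c)) ⬝ᵥ w j := fun j =>
    (hφ j).dotProduct continuous_const
  have hHF : ∀ c, HasDerivAt (fun c => H (F c))
      (h * ∑ j ∈ t, (p j c • g (F c)) ⬝ᵥ w j) c := fun c =>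
    ((hg (F c)).comp_hasDerivAt c (hF c)).congr_deriv (by
      simp only [sum_smul_proj_apply, dotProduct_smul, dotProduct_sum, smul_dotProduct,
        smul_eq_mul])
  rw [← intervalIntegral.integral_eq_sub_of_hasDerivAt (fun c _ => hHF c)
      ((continuous_const.mul (continuous_finsetSum _ fun j _ => hφw j)).intervalIntegrable 0 1),
    intervalIntegral.integral_const_mul,
    intervalIntegral.integral_finsetSum fun j _ => (hφw j).intervalIntegrable 0 1]
  exact congrArg (h * ·) <| Finset.sum_congr rfl fun j _ =>
    intervalIntegral_dotProduct_const ((hφ j).intervalIntegrable 0 1) (w j)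

theorem hamiltonian_eq_of_collocation {ι : Type*} (t : Finset ι) {p : ι → ℝ → ℝ}
    (hp : ∀ j, Continuous (p j)) (hH : ContDiff ℝ 1 H)
    (hg : ∀ x, HasFDerivAt H (∑ i, g x i • (ContinuousLinearMap.proj i : (n → ℝ) →L[ℝ] ℝ)) x)
    {S : Matrix n n ℝ} (hS : Sᵀ = -S) (h : ℝ) {u : ℝ → n → ℝ}
    (hu : ∀ c ∈ Set.Icc (0:ℝ) 1, u c = u 0 + h • ∑ j ∈ t, (∫ x in (0:ℝ)..c, p j x) •
      S *ᵥ ∫ ζ in (0:ℝ)..1, p j ζ • g (u ζ)) :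
    H (u 1) = H (u 0) := by
  set β := fun j => ∫ ζ in (0:ℝ)..1, p j ζ • g (u ζ)
  have hβ : ∀ j, (∫ c in (0:ℝ)..1, p j c •
      g (u 0 + h • ∑ k ∈ t, (∫ x in (0:ℝ)..c, p k x) • S *ᵥ β k)) = β j := fun j =>
    intervalIntegral.integral_congr fun c hc => by
      rw [Set.uIcc_of_le zero_le_one] at hc
      simp only [← hu c hc, β]
  have := apply_sub_apply_eq_sum_integral_dotProduct t hp hH hg (u 0) h (fun j => S *ᵥ β j)
  simp only [hβ, dotProduct_mulVec_self_eq_zero_of_transpose_eq_neg hS, Finset.sum_const_zero,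
    mul_zero, sub_eq_zero] at this
  convert this using 2 <;> exact hu _ (by simp)

end

theorem stmt4_general
    (P : ℕ → Polynomial ℝ)
    (m s : ℕ)
    (S : Matrix (Fin m) (Fin m) ℝ)
    (H : (Fin m → ℝ) → ℝ) (gradH : (Fin m → ℝ) → (Fin m → ℝ))
    (hH1 : ContDiff ℝ 1 H)
    (hgrad : ∀ x : Fin m → ℝ,
      HasFDerivAt H (∑ i : Fin m, gradH x i •
        (ContinuousLinearMap.proj i : (Fin m → ℝ) →L[ℝ] ℝ)) x)
    (h : ℝ)
    (σ : ℝ → Fin m → ℝ)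
    (hσeq : ∀ c ∈ Set.Icc (0:ℝ) 1,
      σ (c * h) = σ 0 + h • ∑ j ∈ Finset.range s,
        (∫ x in (0:ℝ)..c, (P j).eval x) •
          S.mulVec (∫ ζ in (0:ℝ)..1, (P j).eval ζ • gradH (σ (ζ * h))))
    (hskew : Sᵀ = -S) :
    H (σ h) = H (σ 0) := by
  simpa using hamiltonian_eq_of_collocation (Finset.range s) (fun j => (P j).continuous) hH1
    hgrad hskew h (u := fun c => σ (c * h)) fun c hc => by simpa only [zero_mul] using hσeq c hc

/-- For the problem `ẏ = S ∇H(y)` with `S` skew-symmetric (`Sᵀ = −S`), the polynomial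
approximation `σ` of degree `≤ s` satisfying
`σ(ch) = σ(0) + h ∑_{j<s} (∫₀^c P_j) S β_j(σ)`, `β_j(σ) = ∫₀¹ P_j(ζ) ∇H(σ(ζh)) dζ`,
conserves the Hamiltonian: `H(σ(h)) = H(σ(0))`. -/
theorem stmt4
    (P : ℕ → Polynomial ℝ)
    (hPdeg : ∀ j, (P j).natDegree = j)
    (hPlead : ∀ j, 0 < (P j).leadingCoeff)
    (hPorth : ∀ i j : ℕ,
      (∫ x in (0:ℝ)..1, (P i).eval x * (P j).eval x) = if i = j then (1:ℝ) else 0)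
    (m s : ℕ) (hm : 1 ≤ m) (hs : 1 ≤ s)
    (S : Matrix (Fin m) (Fin m) ℝ)
    (H : (Fin m → ℝ) → ℝ) (gradH : (Fin m → ℝ) → (Fin m → ℝ))
    (hH1 : ContDiff ℝ 1 H)
    (hgrad : ∀ x : Fin m → ℝ,
      HasFDerivAt H (∑ i : Fin m, gradH x i •
        (ContinuousLinearMap.proj i : (Fin m → ℝ) →L[ℝ] ℝ)) x)
    (h : ℝ) (hh : 0 < h)
    (σ : ℝ → Fin m → ℝ)
    (hσpoly : ∀ i : Fin m,
      ∃ p : Polynomial ℝ, p.natDegree ≤ s ∧ ∀ t : ℝ, σ t i = p.eval t)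
    (hσeq : ∀ c ∈ Set.Icc (0:ℝ) 1,
      σ (c * h) = σ 0 + h • ∑ j ∈ Finset.range s,
        (∫ x in (0:ℝ)..c, (P j).eval x) •
          S.mulVec (∫ ζ in (0:ℝ)..1, (P j).eval ζ • gradH (σ (ζ * h))))
    (hskew : Sᵀ = -S) :
    H (σ h) = H (σ 0) :=
  stmt4_general P m s S H gradH hH1 hgrad h σ hσeq hskew
end

section
/- Let g : ℝ → ℝ^m be real-analytic on an open interval containing 0. Then for every integer j with 0 ≤ j ≤ q−1, the quadrature error Δ_j(h) := ∫₀¹ P_j(ζ) g(ζh) dζ − ∑_{i=1}^k b_i P_j(c_i) g(c_i h) satisfies Δ_j(h) = O(h^{q−j}) as h → 0⁺, i.e. there exist C > 0 and h₀ > 0 such that |Δ_j(h)| ≤ C h^{q−j} for all 0 < h ≤ h₀. -/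
/-!
Subtract from `g` its Taylor polynomial `T` of degree `< q - j` at `0`. The quadrature is exact
on `ζ ↦ P_j(ζ) ζⁿ` for `n < q - j`, so the error of `ζ ↦ g (ζ h)` equals the error of the
remainder `ζ ↦ (g - T) (ζ h)`. The error functional is bounded by a constant times the sup norm
on `[0, 1]`, and there `‖(g - T) (ζ h)‖ = O(|h| ^ (q - j))` since `|ζ h| ≤ |h|`.
-/

open Polynomial Asymptotics Filter Topology Set

theorem HasFPowerSeriesAt.isBigO_sub_sum_pow_smul_coeff {𝕜 : Type*} [NontriviallyNormedField 𝕜]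
    {E : Type*} [NormedAddCommGroup E] [NormedSpace 𝕜 E] {g : 𝕜 → E}
    {p : FormalMultilinearSeries 𝕜 𝕜 E} (hp : HasFPowerSeriesAt g p 0) (N : ℕ) :
    (fun y => g y - ∑ n ∈ Finset.range N, y ^ n • p.coeff n) =O[𝓝 0] fun y => ‖y‖ ^ N := by
  simpa [FormalMultilinearSeries.partialSum, FormalMultilinearSeries.apply_eq_pow_smul_coeff]
    using hp.isBigO_sub_partialSum_pow N

theorem AnalyticAt.eventually_continuousOn_comp_mul {E : Type*} [NormedAddCommGroup E]
    [NormedSpace ℝ E] [CompleteSpace E] {g : ℝ → E} (hg : AnalyticAt ℝ g 0) :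
    ∀ᶠ h in 𝓝 0, ContinuousOn (fun ζ => g (ζ * h)) (Icc 0 1) := by
  obtain ⟨ε, hε, hgε⟩ := Metric.eventually_nhds_iff.mp hg.eventually_analyticAt
  refine Metric.eventually_nhds_iff.mpr ⟨ε, hε, fun h hh ζ hζ => ?_⟩
  have hζh : dist (ζ * h) 0 < ε := by
    rw [Real.dist_0_eq_abs, abs_mul, abs_of_nonneg hζ.1]
    rw [Real.dist_0_eq_abs] at hh
    nlinarith [abs_nonneg h, hζ.2]
  exact ((hgε hζh).continuousAt.comp (f := fun z => z * h)
    (continuous_mul_const h).continuousAt).continuousWithinAt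

theorem Asymptotics.IsBigO.exists_pos_bound_pow {E : Type*} [NormedAddCommGroup E] {f : ℝ → E}
    {N : ℕ} (hf : f =O[𝓝 0] fun h => h ^ N) :
    ∃ C > 0, ∃ h₀ > 0, ∀ h : ℝ, 0 < h → h ≤ h₀ → ‖f h‖ ≤ C * h ^ N := by
  obtain ⟨C, hC, hfC⟩ := hf.exists_pos
  obtain ⟨ε, hε, hfε⟩ := Metric.eventually_nhds_iff.mp hfC.bound
  refine ⟨C, hC, ε / 2, half_pos hε, fun h h0 hh => ?_⟩
  have := hfε (y := h) (by rw [Real.dist_0_eq_abs, abs_of_pos h0]; linarith)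
  rwa [norm_pow, Real.norm_of_nonneg h0.le] at this

section QuadratureError

variable {E : Type*} [NormedAddCommGroup E] [NormedSpace ℝ E] {k : ℕ}

/-- With `P = P_j` and `f = g (· * h)` this is the paper's `Δ_j(h)`. -/
noncomputable def quadratureError (P : ℝ[X]) (c b : Fin k → ℝ) (f : ℝ → E) : E :=
  (∫ ζ in (0:ℝ)..1, P.eval ζ • f ζ) - ∑ i, (b i * P.eval (c i)) • f (c i)

variable (P : ℝ[X]) (c b : Fin k → ℝ)

theorem quadratureError_sub {f₁ f₂ : ℝ → E} (h₁ : ContinuousOn f₁ (Icc 0 1))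
    (h₂ : ContinuousOn f₂ (Icc 0 1)) :
    quadratureError P c b (f₁ - f₂) = quadratureError P c b f₁ - quadratureError P c b f₂ := by
  have hint : ∀ f : ℝ → E, ContinuousOn f (Icc 0 1) →
      IntervalIntegrable (fun ζ => P.eval ζ • f ζ) MeasureTheory.volume 0 1 := fun f hf =>
    (P.continuous.continuousOn.smul hf).intervalIntegrable_of_Icc zero_le_one
  simp only [quadratureError, Pi.sub_apply, smul_sub, Finset.sum_sub_distrib,
    intervalIntegral.integral_sub (hint f₁ h₁) (hint f₂ h₂)]
  abel

theorem quadratureError_sum_pow_smul [CompleteSpace E] (s : Finset ℕ) (a : ℕ → E) :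
    quadratureError P c b (fun ζ => ∑ n ∈ s, ζ ^ n • a n) =
      ∑ n ∈ s, quadratureError P c b (fun ζ => ζ ^ n) • a n := by
  have hint : ∀ n ∈ s, IntervalIntegrable (fun ζ => (P.eval ζ * ζ ^ n) • a n)
      MeasureTheory.volume 0 1 := fun n _ => by
    apply Continuous.intervalIntegrable; fun_prop
  simp only [quadratureError, Finset.smul_sum, smul_smul, sub_smul, Finset.sum_sub_distrib,
    smul_eq_mul, Finset.sum_smul, intervalIntegral.integral_finsetSum hint,
    intervalIntegral.integral_smul_const]
  rw [Finset.sum_comm (s := Finset.univ)]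

theorem quadratureError_pow_eq_zero {q n : ℕ}
    (hexact : ∀ p : ℝ[X], p.natDegree < q →
      ∑ i, b i * p.eval (c i) = ∫ x in (0:ℝ)..1, p.eval x)
    (hn : P.natDegree + n < q) :
    quadratureError P c b (fun ζ => ζ ^ n) = 0 := by
  have hdeg : (P * X ^ n).natDegree < q :=
    (natDegree_mul_le.trans (by rw [natDegree_X_pow])).trans_lt hn
  have := hexact _ hdeg
  simp only [eval_mul, eval_pow, eval_X] at this
  simp only [quadratureError, smul_eq_mul, ← this, mul_assoc, sub_self]

theorem exists_norm_quadratureError_le (hc : ∀ i, c i ∈ Icc (0:ℝ) 1) :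
    ∃ K, ∀ (f : ℝ → E) (M : ℝ), (∀ ζ ∈ Icc (0:ℝ) 1, ‖f ζ‖ ≤ M) →
      ‖quadratureError P c b f‖ ≤ K * M := by
  obtain ⟨B, hB⟩ := isCompact_Icc.exists_bound_of_continuousOn
    (P.continuous.continuousOn (s := Icc (0:ℝ) 1))
  refine ⟨B + ∑ i, |b i * P.eval (c i)|, fun f M hf => ?_⟩
  have hint : ‖∫ ζ in (0:ℝ)..1, P.eval ζ • f ζ‖ ≤ B * M := by
    have := intervalIntegral.norm_integral_le_of_norm_le_const (a := 0) (b := 1)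
      (C := B * M) (f := fun ζ => P.eval ζ • f ζ) fun ζ hζ => by
        rw [uIoc_of_le zero_le_one] at hζ
        have hζ' : ζ ∈ Icc (0:ℝ) 1 := Ioc_subset_Icc_self hζ
        rw [norm_smul]
        exact mul_le_mul (hB ζ hζ') (hf ζ hζ') (norm_nonneg _)
          ((norm_nonneg _).trans (hB ζ hζ'))
    simpa using this
  have hsum : ‖∑ i, (b i * P.eval (c i)) • f (c i)‖ ≤ (∑ i, |b i * P.eval (c i)|) * M := by
    rw [Finset.sum_mul]
    refine (norm_sum_le _ _).trans (Finset.sum_le_sum fun i _ => ?_)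
    rw [norm_smul, Real.norm_eq_abs]
    exact mul_le_mul_of_nonneg_left (hf _ (hc i)) (abs_nonneg _)
  calc ‖quadratureError P c b f‖ ≤ B * M + (∑ i, |b i * P.eval (c i)|) * M :=
        (norm_sub_le _ _).trans (add_le_add hint hsum)
    _ = _ := by ring

theorem quadratureError_comp_mul_isBigO (hc : ∀ i, c i ∈ Icc (0:ℝ) 1) {R : ℝ → E} {N : ℕ}
    (hR : R =O[𝓝 0] fun y => ‖y‖ ^ N) :
    (fun h => quadratureError P c b fun ζ => R (ζ * h)) =O[𝓝 0] fun h => h ^ N := by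
  obtain ⟨K, hK⟩ := exists_norm_quadratureError_le P c b (E := E) hc
  obtain ⟨C, hC0, hC⟩ := hR.exists_pos
  obtain ⟨ε, hε, hRε⟩ := Metric.eventually_nhds_iff.mp hC.bound
  refine IsBigO.of_bound (K * C) (Metric.eventually_nhds_iff.mpr ⟨ε, hε, fun h hh => ?_⟩)
  rw [Real.dist_0_eq_abs] at hh
  have hζh : ∀ ζ ∈ Icc (0:ℝ) 1, |ζ * h| ≤ |h| := fun ζ hζ => by
    rw [abs_mul, abs_of_nonneg hζ.1]
    exact mul_le_of_le_one_left (abs_nonneg h) hζ.2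
  have hbound : ∀ ζ ∈ Icc (0:ℝ) 1, ‖R (ζ * h)‖ ≤ C * ‖h ^ N‖ := fun ζ hζ => by
    have := hRε (y := ζ * h) (by rw [Real.dist_0_eq_abs]; exact (hζh ζ hζ).trans_lt hh)
    calc ‖R (ζ * h)‖ ≤ C * ‖‖ζ * h‖ ^ N‖ := this
      _ = C * |ζ * h| ^ N := by rw [norm_pow, norm_norm, Real.norm_eq_abs]
      _ ≤ C * |h| ^ N :=
        mul_le_mul_of_nonneg_left (pow_le_pow_left₀ (abs_nonneg _) (hζh ζ hζ) N) hC0.le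
      _ = C * ‖h ^ N‖ := by rw [norm_pow, Real.norm_eq_abs]
  simpa [mul_assoc] using hK _ _ hbound

theorem quadratureError_comp_mul_isBigO_of_analyticAt [CompleteSpace E] {q : ℕ}
    (hexact : ∀ p : ℝ[X], p.natDegree < q →
      ∑ i, b i * p.eval (c i) = ∫ x in (0:ℝ)..1, p.eval x)
    (hc : ∀ i, c i ∈ Icc (0:ℝ) 1) {g : ℝ → E} (hg : AnalyticAt ℝ g 0) :
    (fun h => quadratureError P c b fun ζ => g (ζ * h)) =O[𝓝 0]
      fun h => h ^ (q - P.natDegree) := by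
  obtain ⟨p, hp⟩ := hg
  set N := q - P.natDegree
  set T : ℝ → E := fun y => ∑ n ∈ Finset.range N, y ^ n • p.coeff n
  have hT : ∀ h, quadratureError P c b (fun ζ => T (ζ * h)) = 0 := fun h => by
    have hT_expand : (fun ζ => T (ζ * h)) =
        fun ζ => ∑ n ∈ Finset.range N, ζ ^ n • (h ^ n • p.coeff n) := by
      funext ζ; simp only [T, mul_pow, smul_smul]
    rw [hT_expand, quadratureError_sum_pow_smul]
    refine Finset.sum_eq_zero fun n hn => ?_
    rw [Finset.mem_range] at hn
    rw [quadratureError_pow_eq_zero P c b hexact (by omega), zero_smul]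
  refine (quadratureError_comp_mul_isBigO P c b hc (hp.isBigO_sub_sum_pow_smul_coeff N)).congr'
    ?_ EventuallyEq.rfl
  filter_upwards [hp.analyticAt.eventually_continuousOn_comp_mul] with h hgh
  have hTh : ContinuousOn (fun ζ => T (ζ * h)) (Icc 0 1) := by fun_prop
  have hsub := quadratureError_sub P c b hgh hTh
  rw [hT, sub_zero] at hsub
  exact hsub

end QuadratureError

theorem stmt6_general
    (P : ℕ → Polynomial ℝ)
    (hPdeg : ∀ j, (P j).natDegree = j)
    (q k : ℕ)
    (c b : Fin k → ℝ)
    (hc : ∀ i, c i ∈ Set.Icc (0:ℝ) 1)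
    (hquad : ∀ p : Polynomial ℝ, p.natDegree ≤ q - 1 →
      ∑ i : Fin k, b i * p.eval (c i) = ∫ x in (0:ℝ)..1, p.eval x)
    (m : ℕ)
    (g : ℝ → Fin m → ℝ)
    (aa bb : ℝ) (haa : aa < 0) (hbb : 0 < bb)
    (hg : ∀ x ∈ Set.Ioo aa bb, AnalyticAt ℝ g x)
    (j : ℕ) :
    ∃ C > (0:ℝ), ∃ h₀ > (0:ℝ), ∀ h : ℝ, 0 < h → h ≤ h₀ →
      ‖(∫ ζ in (0:ℝ)..1, (P j).eval ζ • g (ζ * h)) -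
        ∑ i : Fin k, (b i * (P j).eval (c i)) • g (c i * h)‖ ≤ C * h ^ (q - j) := by
  have hexact : ∀ p : Polynomial ℝ, p.natDegree < q →
      ∑ i, b i * p.eval (c i) = ∫ x in (0:ℝ)..1, p.eval x := fun p hp => hquad p (by omega)
  have hO := quadratureError_comp_mul_isBigO_of_analyticAt (P j) c b hexact hc (hg 0 ⟨haa, hbb⟩)
  rw [hPdeg] at hO
  exact hO.exists_pos_bound_pow

/-- Quadrature error for the Fourier coefficients: if the interpolatory quadrature with
distinct nodes `c₁,…,c_k ∈ [0,1]` and weights `b₁,…,b_k` has order `q` (exact for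
polynomials of degree `≤ q−1`), and `g : ℝ → ℝ^m` is real-analytic on an open interval
containing `0`, then for `0 ≤ j ≤ q−1` the error
`Δ_j(h) = ∫₀¹ P_j(ζ) g(ζh) dζ − ∑_i b_i P_j(c_i) g(c_i h)` is `O(h^(q−j))`:
there exist `C > 0` and `h₀ > 0` with `‖Δ_j(h)‖ ≤ C h^(q−j)` for all `0 < h ≤ h₀`. -/
theorem stmt6
    (P : ℕ → Polynomial ℝ)
    (hPdeg : ∀ j, (P j).natDegree = j)
    (hPlead : ∀ j, 0 < (P j).leadingCoeff)
    (hPorth : ∀ i j : ℕ,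
      (∫ x in (0:ℝ)..1, (P i).eval x * (P j).eval x) = if i = j then (1:ℝ) else 0)
    (q k : ℕ) (hq : 1 ≤ q) (hk : 1 ≤ k)
    (c b : Fin k → ℝ)
    (hc : ∀ i, c i ∈ Set.Icc (0:ℝ) 1)
    (hcinj : Function.Injective c)
    (hquad : ∀ p : Polynomial ℝ, p.natDegree ≤ q - 1 →
      ∑ i : Fin k, b i * p.eval (c i) = ∫ x in (0:ℝ)..1, p.eval x)
    (m : ℕ) (hm : 1 ≤ m)
    (g : ℝ → Fin m → ℝ)
    (aa bb : ℝ) (haa : aa < 0) (hbb : 0 < bb)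
    (hg : ∀ x ∈ Set.Ioo aa bb, AnalyticAt ℝ g x)
    (j : ℕ) (hj : j ≤ q - 1) :
    ∃ C > (0:ℝ), ∃ h₀ > (0:ℝ), ∀ h : ℝ, 0 < h → h ≤ h₀ →
      ‖(∫ ζ in (0:ℝ)..1, (P j).eval ζ • g (ζ * h)) -
        ∑ i : Fin k, (b i * (P j).eval (c i)) • g (c i * h)‖ ≤ C * h ^ (q - j) :=
  stmt6_general P hPdeg q k c b hc hquad m g aa bb haa hbb hg j
end

section
/- Fix ξ ∈ [t₀, t₀+τ], η ∈ ℝ^m and t ∈ [ξ, t₀+τ]. Then the map F : C([t₀−τ, t₀], ℝ^m) → ℝ^m (with the sup norm) defined by F(φ) = y(t; ξ, η, φ) is Fréchet differentiable at every continuous φ, and its derivative is the bounded linear map δφ ↦ ∫_{ξ−τ}^{t−τ} Φ_φ(t, ζ+τ) F₂(y(ζ+τ; ξ, η, φ), φ(ζ)) δφ(ζ) dζ, where Φ_φ(·, r) is the solution of Φ̇(t, r) = F₁(y(t; ξ, η, φ), φ(t−τ)) Φ(t, r), Φ(r, r) = I. -/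
/-!
Differentiating the equation formally in the history gives the variational equation
`ż = F₁ z + F₂ δφ(· - τ)`, `z(ξ) = 0`, whose solution is `z(t) = ∫_ξ^t Φ(t, u) F₂ δφ(u - τ) du` by
variation of constants, with `Φ(t, r) = R(t) R(r)⁻¹` for the fundamental solution `Ṙ = F₁ R`,
`R(t₀) = I`. The history enters only through `u ↦ φ(u - τ)`, a linear map of norm at most one.
Grönwall's inequality then shows, in turn, that `φ ↦ y(t)` is Lipschitz, that `δφ ↦ z(t)` is
bounded (it is linear by uniqueness for the linear equation) and, since `f` has a Lipschitz
derivative, that `y(t; φ + δφ) - y(t; φ) - z(t) = O(‖δφ‖²)`.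
-/

open Set Filter
open scoped NNReal

section Gronwall

variable {E : Type*} [NormedAddCommGroup E] [NormedSpace ℝ E]

theorem gronwallBound_zero_mul (K c ε x : ℝ) :
    gronwallBound 0 K (c * ε) x = c * gronwallBound 0 K ε x := by
  unfold gronwallBound
  split_ifs <;> ring

theorem norm_le_mul_gronwallBound_of_hasDerivWithinAt {f f' : ℝ → E} {a b K ε c : ℝ}
    (hf : ∀ u ∈ Icc a b, HasDerivWithinAt f (f' u) (Icc a b) u) (ha : f a = 0)
    (hK : 0 ≤ K) (hε : 0 ≤ ε) (hc : 0 ≤ c)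
    (bound : ∀ u ∈ Ico a b, ‖f' u‖ ≤ K * ‖f u‖ + c * ε) :
    ∀ u ∈ Icc a b, ‖f u‖ ≤ c * gronwallBound 0 K ε (b - a) := by
  intro u hu
  have h := norm_le_gronwallBound_of_norm_deriv_right_le
    (fun x hx => (hf x hx).continuousWithinAt)
    (fun x hx => (hf x (Ico_subset_Icc_self hx)).mono_of_mem_nhdsWithin
      (Icc_mem_nhdsGE_of_mem hx)) (show ‖f a‖ ≤ 0 by simp [ha]) bound u hu
  rw [gronwallBound_zero_mul] at h
  exact h.trans (mul_le_mul_of_nonneg_left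
    (gronwallBound_mono le_rfl hε hK (by linarith [hu.2])) hc)

end Gronwall

section LinearODE

variable {E : Type*} [NormedAddCommGroup E] [NormedSpace ℝ E]

theorem IsIntegralCurveOn.exists_glue_Icc {v : ℝ → E → E} {a k b : ℝ} {X₁ X₂ : ℝ → E}
    (h₁ : IsIntegralCurveOn X₁ v (Icc a k)) (h₂ : IsIntegralCurveOn X₂ v (Icc k b))
    (hak : a ≤ k) (hkb : k ≤ b) (hk : X₁ k = X₂ k) :
    ∃ X : ℝ → E, X a = X₁ a ∧ IsIntegralCurveOn X v (Icc a b) := by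
  set X : ℝ → E := fun u => if u ≤ k then X₁ u else X₂ u
  have hX₁ : EqOn X X₁ (Icc a k) := fun u hu => if_pos hu.2
  have hX₂ : EqOn X X₂ (Icc k b) := fun u hu => by
    rcases hu.1.eq_or_lt with rfl | hlt
    · simp [X, hk]
    · simp [X, not_le.2 hlt]
  refine ⟨X, hX₁ ⟨le_rfl, hak⟩, fun u hu => ?_⟩
  rw [← Icc_union_Icc_eq_Icc hak hkb]
  refine HasDerivWithinAt.union ?_ ?_
  · by_cases hu₁ : u ∈ Icc a k
    · rw [hX₁ hu₁]; exact (h₁ u hu₁).congr hX₁ (hX₁ hu₁)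
    · exact HasFDerivWithinAt.of_notMem_closure (by rwa [closure_Icc])
  · by_cases hu₂ : u ∈ Icc k b
    · rw [hX₂ hu₂]; exact (h₂ u hu₂).congr hX₂ (hX₂ hu₂)
    · exact HasFDerivWithinAt.of_notMem_closure (by rwa [closure_Icc])

variable [CompleteSpace E]

theorem exists_isIntegralCurveOn_clm_apply_of_two_mul_le {B : ℝ → E →L[ℝ] E} {k c : ℝ} {K : ℝ≥0}
    (hkc : k ≤ c) (hB : ContinuousOn B (Icc k c)) (hBK : ∀ u ∈ Icc k c, ‖B u‖₊ ≤ K)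
    (hK : 2 * K * (c - k) ≤ 1) (x₀ : E) :
    ∃ X : ℝ → E, X k = x₀ ∧ IsIntegralCurveOn X (fun u x => B u x) (Icc k c) := by
  -- on the ball of radius `‖x₀‖` around `x₀` the field is bounded by `2 K ‖x₀‖`, so the
  -- Picard-Lindelöf time span is `1 / (2 K)` whatever `x₀` is
  have hPL : IsPicardLindelof (fun u x => B u x) (⟨k, le_rfl, hkc⟩ : Icc k c) x₀ ‖x₀‖₊ 0
      (2 * K * ‖x₀‖₊) K := by
    refine ⟨fun u hu => ((B u).lipschitz.weaken (hBK u hu)).lipschitzOnWith,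
      fun x _ => hB.clm_apply continuousOn_const, fun u hu x hx => ?_, ?_⟩
    · have hx' : ‖x‖ ≤ 2 * ‖x₀‖ := by
        have := norm_le_norm_add_norm_sub' x x₀
        rw [Metric.mem_closedBall, dist_eq_norm, coe_nnnorm] at hx
        linarith
      have hBu : ‖B u‖ ≤ K := hBK u hu
      calc ‖B u x‖ ≤ ‖B u‖ * ‖x‖ := (B u).le_opNorm x
        _ ≤ K * (2 * ‖x₀‖) := mul_le_mul hBu hx' (norm_nonneg _) K.2
        _ = _ := by push_cast; ring
    · rw [sub_self, max_eq_left (sub_nonneg.2 hkc)]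
      push_cast
      nlinarith [norm_nonneg x₀]
  exact hPL.exists_eq_forall_mem_Icc_hasDerivWithinAt₀

theorem exists_isIntegralCurveOn_clm_apply {B : ℝ → E →L[ℝ] E} {a b : ℝ}
    (hab : a ≤ b) (hB : ContinuousOn B (Icc a b)) (x₀ : E) :
    ∃ X : ℝ → E, X a = x₀ ∧ IsIntegralCurveOn X (fun u x => B u x) (Icc a b) := by
  obtain ⟨C, hC⟩ := isCompact_Icc.exists_bound_of_continuousOn hB
  set K : ℝ≥0 := C.toNNReal
  have hBK : ∀ u ∈ Icc a b, ‖B u‖₊ ≤ K := fun u hu => by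
    rw [← NNReal.coe_le_coe, coe_nnnorm, Real.coe_toNNReal']
    exact (hC u hu).trans (le_max_left _ _)
  set h : ℝ := 1 / (2 * K + 1)
  have hh : 0 < h := by positivity
  have hKh : 2 * K * h ≤ 1 := by
    rw [mul_one_div, div_le_one (by positivity)]; linarith
  -- the admissible step `h` does not depend on the initial value, so finitely many steps reach `b`
  have step : ∀ n : ℕ, ∃ X : ℝ → E, X a = x₀ ∧
      IsIntegralCurveOn X (fun u x => B u x) (Icc a (min b (a + n * h))) := by
    intro n
    induction n with
    | zero =>
      simp only [CharP.cast_eq_zero, zero_mul, add_zero, min_eq_right hab]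
      exact exists_isIntegralCurveOn_clm_apply_of_two_mul_le le_rfl (hB.mono (by simp [hab]))
        (fun u hu => hBK u (by simp_all)) (by simp) x₀
    | succ n ih =>
      obtain ⟨X, hXa, hX⟩ := ih
      set c := min b (a + n * h)
      set c' := min b (a + (n + 1 : ℕ) * h)
      have hac : a ≤ c := le_min hab (by nlinarith [n.cast_nonneg (α := ℝ)])
      have hcc' : c ≤ c' := min_le_min le_rfl (by push_cast; nlinarith)
      have hc'b : c' ≤ b := min_le_left _ _
      have hsub : Icc c c' ⊆ Icc a b := Icc_subset_Icc hac hc'b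
      have hlen : c' - c ≤ h := by
        have : c' ≤ c + h := by
          simp only [c, c', ← min_add_add_right]; push_cast
          exact min_le_min (by linarith) (by linarith)
        linarith
      obtain ⟨X', hX'c, hX'⟩ := exists_isIntegralCurveOn_clm_apply_of_two_mul_le hcc'
        (hB.mono hsub) (fun u hu => hBK u (hsub hu))
        (le_trans (by gcongr) hKh) (X c)
      obtain ⟨Y, hYa, hY⟩ := hX.exists_glue_Icc hX' hac hcc' hX'c.symm
      exact ⟨Y, hYa.trans hXa, hY⟩
  obtain ⟨n, hn⟩ := exists_nat_ge ((b - a) / h)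
  have hbn : min b (a + n * h) = b := min_eq_left (by rw [div_le_iff₀ hh] at hn; linarith)
  simpa only [hbn] using step n

end LinearODE

section Fundamental

variable {E : Type*} [NormedAddCommGroup E] [NormedSpace ℝ E]

theorem exists_fundamentalSolution [FiniteDimensional ℝ E] {A : ℝ → E →L[ℝ] E} {a b : ℝ}
    (hab : a ≤ b) (hA : ContinuousOn A (Icc a b)) :
    ∃ R S : ℝ → E →L[ℝ] E,
      IsIntegralCurveOn R (fun u X => (A u).comp X) (Icc a b) ∧
      ContinuousOn S (Icc a b) ∧ ∀ u ∈ Icc a b, (R u).comp (S u) = .id ℝ E := by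
  set compL := ContinuousLinearMap.compL ℝ E E E
  obtain ⟨R, hRa, hR⟩ := exists_isIntegralCurveOn_clm_apply hab
    (compL.continuous.comp_continuousOn hA) (.id ℝ E)
  obtain ⟨S, hSa, hS⟩ := exists_isIntegralCurveOn_clm_apply hab
    (compL.flip.continuous.comp_continuousOn hA).neg (.id ℝ E)
  simp only [compL, Function.comp_apply, Pi.neg_apply, ContinuousLinearMap.compL_apply,
    neg_apply, ContinuousLinearMap.flip_apply] at hR hS
  refine ⟨R, S, hR, fun u hu => (hS u hu).continuousWithinAt, fun u hu => ?_⟩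
  -- `S ∘ R` has derivative `-S A R + S A R = 0`, so `S` is a left inverse of `R`
  have hSR : (S u).comp (R u) = .id ℝ E := by
    have hc := constant_of_has_deriv_right_zero (f := fun v => (S v).comp (R v))
      (fun v hv => ((hS v hv).clm_comp (hR v hv)).continuousWithinAt) (fun v hv => ?_) u hu
    · simpa [hSa, hRa] using hc
    · have hd := ((hS v (Ico_subset_Icc_self hv)).clm_comp
        (hR v (Ico_subset_Icc_self hv))).mono_of_mem_nhdsWithin (Icc_mem_nhdsGE_of_mem hv)
      rwa [ContinuousLinearMap.neg_comp, ContinuousLinearMap.comp_assoc, neg_add_cancel] at hd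
  have hRS : (R u : E →ₗ[ℝ] E) ∘ₗ (S u : E →ₗ[ℝ] E) = LinearMap.id :=
    (LinearMap.comp_eq_id_comm ℝ E).2 (by rw [← ContinuousLinearMap.toLinearMap_comp, hSR]; rfl)
  exact ContinuousLinearMap.coe_injective (by rw [ContinuousLinearMap.toLinearMap_comp, hRS]; rfl)

theorem hasDerivWithinAt_apply_integral [CompleteSpace E] {R S A : ℝ → E →L[ℝ] E} {g : ℝ → E}
    {a b u : ℝ} (hu : u ∈ Icc a b) (hR : HasDerivWithinAt R ((A u).comp (R u)) (Icc a b) u)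
    (hRS : (R u).comp (S u) = .id ℝ E) (hg : ContinuousOn (fun r => S r (g r)) (Icc a b)) :
    HasDerivWithinAt (fun v => R v (∫ r in a..v, S r (g r)))
      (A u (R u (∫ r in a..u, S r (g r))) + g u) (Icc a b) u := by
  have := Fact.mk hu
  have hI : HasDerivWithinAt (fun v => ∫ r in a..v, S r (g r)) (S u (g u)) (Icc a b) u :=
    intervalIntegral.integral_hasDerivWithinAt_right
      ((hg.mono (uIcc_subset_Icc (left_mem_Icc.2 (hu.1.trans hu.2)) hu)).intervalIntegrable)
      (hg.stronglyMeasurableAtFilter_nhdsWithin measurableSet_Icc u) (hg u hu)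
  have hRSg : R u (S u (g u)) = g u := by
    simpa using congrArg (fun T => T (g u)) hRS
  simpa [hRSg] using hR.clm_apply hI

end Fundamental

section Calculus

variable {E E' G : Type*} [NormedAddCommGroup E] [NormedSpace ℝ E] [NormedAddCommGroup E']
  [NormedSpace ℝ E'] [NormedAddCommGroup G] [NormedSpace ℝ G]

theorem exists_lipschitzWith_of_norm_fderiv_le {g : E → G} (hg : Differentiable ℝ g) {C : ℝ}
    (hC : ∀ x, ‖fderiv ℝ g x‖ ≤ C) : ∃ K : ℝ≥0, LipschitzWith K g :=
  ⟨C.toNNReal, lipschitzWith_of_nnnorm_fderiv_le hg fun x => by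
    rw [← NNReal.coe_le_coe, coe_nnnorm, Real.coe_toNNReal']
    exact (hC x).trans (le_max_left _ _)⟩

theorem exists_lipschitzWith_of_norm_iteratedFDeriv_le {g : E → G}
    (hg : ContDiff ℝ 2 g) (h₁ : ∃ C, ∀ x, ‖iteratedFDeriv ℝ 1 g x‖ ≤ C)
    (h₂ : ∃ C, ∀ x, ‖iteratedFDeriv ℝ 2 g x‖ ≤ C) :
    (∃ K : ℝ≥0, LipschitzWith K g) ∧ ∃ C : ℝ≥0, LipschitzWith C (fderiv ℝ g) := by
  obtain ⟨C₁, hC₁⟩ := h₁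
  obtain ⟨C₂, hC₂⟩ := h₂
  refine ⟨exists_lipschitzWith_of_norm_fderiv_le (C := C₁) (hg.differentiable (by simp))
    fun x => ?_, exists_lipschitzWith_of_norm_fderiv_le (C := C₂)
      ((hg.fderiv_right (m := 1) le_rfl).differentiable one_ne_zero) fun x => ?_⟩
  · simpa using hC₁ x
  · simpa [← norm_iteratedFDeriv_one, norm_iteratedFDeriv_fderiv] using hC₂ x

theorem norm_sub_sub_fderiv_le_of_lipschitzWith {F : E → G} {C : ℝ≥0}
    (hF : Differentiable ℝ F) (hC : LipschitzWith C (fderiv ℝ F)) (x h : E) :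
    ‖F (x + h) - F x - fderiv ℝ F x h‖ ≤ C * ‖h‖ ^ 2 := by
  have hbound : ∀ y ∈ Metric.closedBall x ‖h‖, ‖fderiv ℝ F y - fderiv ℝ F x‖ ≤ C * ‖h‖ :=
    fun y hy => by
      rw [← dist_eq_norm]
      exact (hC.dist_le_mul y x).trans (by gcongr; exact hy)
  have := (convex_closedBall x ‖h‖).norm_image_sub_le_of_norm_fderiv_le' (fun y _ => hF y)
    hbound (Metric.mem_closedBall_self (norm_nonneg h)) (by simp : x + h ∈ _)
  simpa [sq, mul_assoc] using this

theorem hasFDerivAt_of_norm_sub_sub_le_mul_sq {f : E → G} {L : E →L[ℝ] G} {p : E} {c : ℝ}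
    (h : ∀ δ, ‖f (p + δ) - f p - L δ‖ ≤ c * ‖δ‖ ^ 2) : HasFDerivAt f L p := by
  rw [hasFDerivAt_iff_isLittleO_nhds_zero]
  refine (Asymptotics.IsBigO.of_bound c (Eventually.of_forall fun δ => ?_)).trans_isLittleO
    (Asymptotics.isLittleO_norm_pow_id one_lt_two)
  simpa using h δ

variable {f : E → E' → G} {y : E} {w : E'}

theorem fderiv_apply_left_eq_comp_inl (hf : DifferentiableAt ℝ (Function.uncurry f) (y, w)) :
    fderiv ℝ (fun z => f z w) y = (fderiv ℝ (Function.uncurry f) (y, w)).comp (.inl ℝ E E') :=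
  (HasFDerivAt.comp (g := Function.uncurry f) y hf.hasFDerivAt
    (hasFDerivAt_prodMk_left (𝕜 := ℝ) y w)).fderiv

theorem fderiv_apply_right_eq_comp_inr (hf : DifferentiableAt ℝ (Function.uncurry f) (y, w)) :
    fderiv ℝ (fun z => f y z) w = (fderiv ℝ (Function.uncurry f) (y, w)).comp (.inr ℝ E E') :=
  (HasFDerivAt.comp (g := Function.uncurry f) w hf.hasFDerivAt
    (hasFDerivAt_prodMk_right (𝕜 := ℝ) y w)).fderiv

theorem fderiv_uncurry_apply (hf : DifferentiableAt ℝ (Function.uncurry f) (y, w)) (x : E)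
    (v : E') : fderiv ℝ (Function.uncurry f) (y, w) (x, v)
      = fderiv ℝ (fun z => f z w) y x + fderiv ℝ (fun z => f y z) w v := by
  rw [fderiv_apply_left_eq_comp_inl hf, fderiv_apply_right_eq_comp_inr hf,
    ContinuousLinearMap.comp_apply, ContinuousLinearMap.comp_apply, ← map_add]
  simp

theorem ContinuousOn.fderiv_apply_left (hf : Differentiable ℝ (Function.uncurry f))
    (hf' : Continuous (fderiv ℝ (Function.uncurry f))) {y : ℝ → E} {w : ℝ → E'} {s : Set ℝ}
    (hy : ContinuousOn y s) (hw : ContinuousOn w s) :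
    ContinuousOn (fun u => fderiv ℝ (fun z => f z (w u)) (y u)) s :=
  ((hf'.comp_continuousOn (hy.prodMk hw)).clm_comp continuousOn_const).congr fun _ _ =>
    fderiv_apply_left_eq_comp_inl (hf _)

theorem ContinuousOn.fderiv_apply_right (hf : Differentiable ℝ (Function.uncurry f))
    (hf' : Continuous (fderiv ℝ (Function.uncurry f))) {y : ℝ → E} {w : ℝ → E'} {s : Set ℝ}
    (hy : ContinuousOn y s) (hw : ContinuousOn w s) :
    ContinuousOn (fun u => fderiv ℝ (fun z => f (y u) z) (w u)) s :=
  ((hf'.comp_continuousOn (hy.prodMk hw)).clm_comp continuousOn_const).congr fun _ _ =>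
    fderiv_apply_right_eq_comp_inr (hf _)

end Calculus

section ParametricODE

theorem norm_prod_mk_le_of_opNorm_le {E E' P : Type*} [NormedAddCommGroup E] [NormedAddCommGroup E']
    [NormedSpace ℝ E'] [NormedAddCommGroup P] [NormedSpace ℝ P] {W : ℝ → P →L[ℝ] E'} {M : ℝ}
    (hW : ∀ u, ‖W u‖ ≤ M) (x : E) (u : ℝ) (δ : P) : ‖(x, W u δ)‖ ≤ ‖x‖ + M * ‖δ‖ := by
  have hM : 0 ≤ M := (norm_nonneg _).trans (hW u)
  have hWδ : ‖W u δ‖ ≤ M * ‖δ‖ := (W u).le_of_opNorm_le (hW u) δ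
  exact norm_prod_le_iff.2 ⟨le_add_of_nonneg_right (by positivity),
    hWδ.trans (le_add_of_nonneg_left (norm_nonneg x))⟩

variable {E E' P : Type*} [NormedAddCommGroup E] [NormedSpace ℝ E] [NormedAddCommGroup E']
  [NormedSpace ℝ E'] [NormedAddCommGroup P] [NormedSpace ℝ P]

variable {F : E × E' → E} {K C : ℝ≥0} {W : ℝ → P →L[ℝ] E'} {M a b : ℝ}
  {Y : P → ℝ → E} {p : P} {z : P → ℝ → E}

theorem norm_sub_le_of_isIntegralCurveOn_param (hK : LipschitzWith K F) (hW : ∀ u, ‖W u‖ ≤ M)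
    (hY : ∀ q, IsIntegralCurveOn (Y q) (fun u y => F (y, W u q)) (Icc a b))
    (hYa : ∀ q, Y q a = Y p a) (δ : P) :
    ∀ u ∈ Icc a b, ‖Y (p + δ) u - Y p u‖ ≤ ‖δ‖ * gronwallBound 0 K (K * M) (b - a) := by
  have hM : 0 ≤ M := (norm_nonneg _).trans (hW a)
  refine norm_le_mul_gronwallBound_of_hasDerivWithinAt (fun u hu => (hY _ u hu).sub (hY p u hu))
    (by simp [hYa]) K.2 (by positivity) (norm_nonneg δ) fun u _ => ?_
  calc ‖F (Y (p + δ) u, W u (p + δ)) - F (Y p u, W u p)‖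
      ≤ K * ‖(Y (p + δ) u - Y p u, W u δ)‖ := by
        simpa using hK.norm_sub_le (Y (p + δ) u, W u (p + δ)) (Y p u, W u p)
    _ ≤ K * (‖Y (p + δ) u - Y p u‖ + M * ‖δ‖) := by
        gcongr; exact norm_prod_mk_le_of_opNorm_le hW _ u δ
    _ = K * ‖Y (p + δ) u - Y p u‖ + ‖δ‖ * (K * M) := by ring

theorem norm_le_of_isIntegralCurveOn_variational (hK : LipschitzWith K F) (hW : ∀ u, ‖W u‖ ≤ M)
    {δ : P}
    (hz : IsIntegralCurveOn (z δ) (fun u x => fderiv ℝ F (Y p u, W u p) (x, W u δ)) (Icc a b))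
    (hza : z δ a = 0) :
    ∀ u ∈ Icc a b, ‖z δ u‖ ≤ ‖δ‖ * gronwallBound 0 K (K * M) (b - a) := by
  have hM : 0 ≤ M := (norm_nonneg _).trans (hW a)
  refine norm_le_mul_gronwallBound_of_hasDerivWithinAt hz hza K.2 (by positivity) (norm_nonneg δ)
    fun u _ => ?_
  calc ‖fderiv ℝ F (Y p u, W u p) (z δ u, W u δ)‖ ≤ K * ‖(z δ u, W u δ)‖ :=
        (fderiv ℝ F _).le_of_opNorm_le (norm_fderiv_le_of_lipschitz ℝ hK) _
    _ ≤ K * (‖z δ u‖ + M * ‖δ‖) := by gcongr; exact norm_prod_mk_le_of_opNorm_le hW _ u δ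
    _ = K * ‖z δ u‖ + ‖δ‖ * (K * M) := by ring

theorem eq_smul_add_smul_of_isIntegralCurveOn_variational (hK : LipschitzWith K F)
    (hz : ∀ δ, IsIntegralCurveOn (z δ) (fun u x => fderiv ℝ F (Y p u, W u p) (x, W u δ)) (Icc a b))
    (hza : ∀ δ, z δ a = 0) (c₁ c₂ : ℝ) (δ₁ δ₂ : P) :
    ∀ u ∈ Icc a b, z (c₁ • δ₁ + c₂ • δ₂) u = c₁ • z δ₁ u + c₂ • z δ₂ u := by
  set δ := c₁ • δ₁ + c₂ • δ₂
  -- the defect solves the homogeneous linearized equation with zero initial value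
  have hbound : ∀ u ∈ Ico a b, ‖fderiv ℝ F (Y p u, W u p) (z δ u, W u δ)
      - c₁ • fderiv ℝ F (Y p u, W u p) (z δ₁ u, W u δ₁)
      - c₂ • fderiv ℝ F (Y p u, W u p) (z δ₂ u, W u δ₂)‖
      ≤ K * ‖(z δ - c₁ • z δ₁ - c₂ • z δ₂) u‖ + 0 * 0 := fun u _ => by
    set D := fderiv ℝ F (Y p u, W u p)
    have hpair : ((z δ - c₁ • z δ₁ - c₂ • z δ₂) u, (0 : E'))
        = (z δ u, W u δ) - c₁ • (z δ₁ u, W u δ₁) - c₂ • (z δ₂ u, W u δ₂) := by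
      ext
      · simp
      · simp [δ]
    have hlin : D (z δ u, W u δ) - c₁ • D (z δ₁ u, W u δ₁) - c₂ • D (z δ₂ u, W u δ₂)
        = D ((z δ - c₁ • z δ₁ - c₂ • z δ₂) u, 0) := by
      rw [hpair, map_sub, map_sub, map_smul, map_smul]
    rw [hlin, mul_zero, add_zero]
    exact D.le_of_opNorm_le (norm_fderiv_le_of_lipschitz ℝ hK) _ |>.trans_eq (by simp)
  have hdefect := norm_le_mul_gronwallBound_of_hasDerivWithinAt
    (fun u hu => ((hz δ u hu).sub ((hz δ₁ u hu).const_smul c₁)).sub ((hz δ₂ u hu).const_smul c₂))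
    (by simp [hza]) K.2 le_rfl le_rfl hbound
  intro u hu
  simpa [sub_sub, sub_eq_zero] using hdefect u hu

theorem exists_continuousLinearMap_eq_variational (hK : LipschitzWith K F)
    (hW : ∀ u, ‖W u‖ ≤ M)
    (hz : ∀ δ, IsIntegralCurveOn (z δ) (fun u x => fderiv ℝ F (Y p u, W u p) (x, W u δ)) (Icc a b))
    (hza : ∀ δ, z δ a = 0) (hab : a ≤ b) :
    ∃ L : P →L[ℝ] E, ∀ δ, L δ = z δ b := by
  have hb : b ∈ Icc a b := right_mem_Icc.2 hab
  have hlin := eq_smul_add_smul_of_isIntegralCurveOn_variational hK hz hza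
  let L : P →ₗ[ℝ] E :=
    { toFun := fun δ => z δ b
      map_add' := fun δ₁ δ₂ => by simpa using hlin 1 1 δ₁ δ₂ b hb
      map_smul' := fun c δ => by simpa using hlin c 0 δ 0 b hb }
  exact ⟨L.mkContinuous _ fun δ =>
    (norm_le_of_isIntegralCurveOn_variational hK hW (hz δ) (hza δ) b hb).trans_eq (mul_comm _ _),
    fun δ => rfl⟩

theorem norm_sub_sub_variational_le (hF : Differentiable ℝ F) (hK : LipschitzWith K F)
    (hC : LipschitzWith C (fderiv ℝ F)) (hW : ∀ u, ‖W u‖ ≤ M)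
    (hY : ∀ q, IsIntegralCurveOn (Y q) (fun u y => F (y, W u q)) (Icc a b))
    (hYa : ∀ q, Y q a = Y p a)
    (hz : ∀ δ, IsIntegralCurveOn (z δ) (fun u x => fderiv ℝ F (Y p u, W u p) (x, W u δ)) (Icc a b))
    (hza : ∀ δ, z δ a = 0) (δ : P) :
    ∀ u ∈ Icc a b, ‖Y (p + δ) u - Y p u - z δ u‖ ≤ ‖δ‖ ^ 2 *
      gronwallBound 0 K (C * (gronwallBound 0 K (K * M) (b - a) + M) ^ 2) (b - a) := by
  set G := gronwallBound 0 K (K * M) (b - a)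
  have hYδ := norm_sub_le_of_isIntegralCurveOn_param hK hW hY hYa δ
  refine norm_le_mul_gronwallBound_of_hasDerivWithinAt
    (fun u hu => ((hY _ u hu).sub (hY p u hu)).sub (hz δ u hu)) (by simp [hYa, hza]) K.2
    (by positivity) (by positivity) fun u hu => ?_
  set x : E × E' := (Y p u, W u p)
  set h : E × E' := (Y (p + δ) u - Y p u, W u δ)
  set D := fderiv ℝ F x
  -- second-order Taylor remainder plus the linearized equation applied to the defect
  have hsplit : F (Y (p + δ) u, W u (p + δ)) - F x - D (z δ u, W u δ)
      = (F (x + h) - F x - D h) + D (Y (p + δ) u - Y p u - z δ u, 0) := by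
    have hxh : x + h = (Y (p + δ) u, W u (p + δ)) := by simp [x, h]
    have hdef : ((Y (p + δ) u - Y p u - z δ u, 0) : E × E') = h - (z δ u, W u δ) := by
      ext <;> simp [h]
    rw [hxh, hdef, map_sub]
    abel
  have hh : ‖h‖ ≤ (G + M) * ‖δ‖ := by
    have := hYδ u (Ico_subset_Icc_self hu)
    exact (norm_prod_mk_le_of_opNorm_le hW _ u δ).trans (by linarith)
  calc ‖F (Y (p + δ) u, W u (p + δ)) - F x - D (z δ u, W u δ)‖
      ≤ ‖F (x + h) - F x - D h‖ + ‖D (Y (p + δ) u - Y p u - z δ u, 0)‖ := by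
        rw [hsplit]; exact norm_add_le _ _
    _ ≤ C * ‖h‖ ^ 2 + K * ‖Y (p + δ) u - Y p u - z δ u‖ := by
        gcongr
        · exact norm_sub_sub_fderiv_le_of_lipschitzWith hF hC x h
        · exact D.le_of_opNorm_le (norm_fderiv_le_of_lipschitz ℝ hK) _ |>.trans_eq (by simp)
    _ ≤ C * ((G + M) * ‖δ‖) ^ 2 + K * ‖Y (p + δ) u - Y p u - z δ u‖ := by gcongr
    _ = K * ‖(Y (p + δ) - Y p - z δ) u‖ + ‖δ‖ ^ 2 * (C * (G + M) ^ 2) := by simp; ring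

theorem hasFDerivAt_apply_of_isIntegralCurveOn_variational (hF : Differentiable ℝ F)
    (hK : LipschitzWith K F) (hC : LipschitzWith C (fderiv ℝ F)) (hW : ∀ u, ‖W u‖ ≤ M)
    (hY : ∀ q, IsIntegralCurveOn (Y q) (fun u y => F (y, W u q)) (Icc a b))
    (hYa : ∀ q, Y q a = Y p a)
    (hz : ∀ δ, IsIntegralCurveOn (z δ) (fun u x => fderiv ℝ F (Y p u, W u p) (x, W u δ)) (Icc a b))
    (hza : ∀ δ, z δ a = 0) (hab : a ≤ b) :
    ∃ L : P →L[ℝ] E, (∀ δ, L δ = z δ b) ∧ HasFDerivAt (fun q => Y q b) L p := by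
  obtain ⟨L, hL⟩ := exists_continuousLinearMap_eq_variational hK hW hz hza hab
  exact ⟨L, hL, hasFDerivAt_of_norm_sub_sub_le_mul_sq fun δ => by
    rw [hL]
    exact (norm_sub_sub_variational_le hF hK hC hW hY hYa hz hza δ b
      (right_mem_Icc.2 hab)).trans_eq (mul_comm _ _)⟩

end ParametricODE

section VariationOfConstants

variable {E E' P : Type*} [NormedAddCommGroup E] [NormedSpace ℝ E] [FiniteDimensional ℝ E]
  [NormedAddCommGroup E'] [NormedSpace ℝ E'] [NormedAddCommGroup P] [NormedSpace ℝ P]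

theorem exists_hasFDerivAt_apply_eq_integral {f : E → E' → E} {K C : ℝ≥0}
    (hf : Differentiable ℝ (Function.uncurry f)) (hK : LipschitzWith K (Function.uncurry f))
    (hC : LipschitzWith C (fderiv ℝ (Function.uncurry f)))
    {W : ℝ → P →L[ℝ] E'} {M a b : ℝ} (hW : ∀ u, ‖W u‖ ≤ M)
    (hWc : ∀ q, ContinuousOn (fun u => W u q) (Icc a b)) {Y : P → ℝ → E} {p : P}
    (hY : ∀ q, IsIntegralCurveOn (Y q) (fun u y => f y (W u q)) (Icc a b))
    (hYa : ∀ q, Y q a = Y p a) {R S : ℝ → E →L[ℝ] E}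
    (hR : IsIntegralCurveOn R (fun u X => (fderiv ℝ (fun y => f y (W u p)) (Y p u)).comp X)
      (Icc a b))
    (hS : ContinuousOn S (Icc a b)) (hRS : ∀ u ∈ Icc a b, (R u).comp (S u) = .id ℝ E)
    (hab : a ≤ b) :
    ∃ L : P →L[ℝ] E, HasFDerivAt (fun q => Y q b) L p ∧ ∀ δ, L δ =
      ∫ u in a..b, ((R b).comp (S u)) (fderiv ℝ (fun w => f (Y p u) w) (W u p) (W u δ)) := by
  set g : P → ℝ → E := fun δ u => fderiv ℝ (fun w => f (Y p u) w) (W u p) (W u δ)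
  have hgc : ∀ δ, ContinuousOn (fun u => S u (g δ u)) (Icc a b) := fun δ =>
    hS.clm_apply (((hY p).continuousOn.fderiv_apply_right hf hC.continuous (hWc p)).clm_apply
      (hWc δ))
  set z : P → ℝ → E := fun δ v => R v (∫ u in a..v, S u (g δ u))
  have hz : ∀ δ, IsIntegralCurveOn (z δ)
      (fun u x => fderiv ℝ (Function.uncurry f) (Y p u, W u p) (x, W u δ)) (Icc a b) :=
    fun δ u hu => by
      simpa [fderiv_uncurry_apply (hf _)] using
        hasDerivWithinAt_apply_integral (A := fun u => fderiv ℝ (fun y => f y (W u p)) (Y p u))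
          hu (hR u hu) (hRS u hu) (hgc δ)
  obtain ⟨L, hLz, hL⟩ :=
    hasFDerivAt_apply_of_isIntegralCurveOn_variational hf hK hC hW hY hYa hz (by simp [z]) hab
  refine ⟨L, hL, fun δ => ?_⟩
  rw [hLz, show z δ b = R b (∫ u in a..b, S u (g δ u)) from rfl,
    ← ContinuousLinearMap.intervalIntegral_comp_comm _
    ((hgc δ).intervalIntegrable_of_Icc hab)]
  rfl

end VariationOfConstants

section History

variable {E : Type*} [NormedAddCommGroup E] [NormedSpace ℝ E]

noncomputable def evalExtendByZero (a b s : ℝ) : C(Icc a b, E) →L[ℝ] E :=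
  if h : s ∈ Icc a b then ContinuousMap.evalCLM ℝ ⟨s, h⟩ else 0

variable {a b : ℝ}

theorem evalExtendByZero_apply (s : ℝ) (ψ : C(Icc a b, E)) :
    evalExtendByZero a b s ψ = if h : s ∈ Icc a b then ψ ⟨s, h⟩ else 0 := by
  unfold evalExtendByZero
  split_ifs <;> rfl

theorem norm_evalExtendByZero_le (s : ℝ) :
    ‖(evalExtendByZero a b s : C(Icc a b, E) →L[ℝ] E)‖ ≤ 1 := by
  refine ContinuousLinearMap.opNorm_le_bound _ zero_le_one fun ψ => ?_
  rw [evalExtendByZero_apply, one_mul]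
  split_ifs
  · exact ψ.norm_coe_le_norm _
  · simp

theorem continuousOn_evalExtendByZero (ψ : C(Icc a b, E)) :
    ContinuousOn (fun s => evalExtendByZero a b s ψ) (Icc a b) := by
  rw [continuousOn_iff_continuous_domRestrict]
  convert ψ.continuous using 1
  funext s
  simp [domRestrict, evalExtendByZero_apply, s.2]

end History

theorem stmt15_general
    (m : ℕ) (τ t₀ : ℝ)
    (f : (Fin m → ℝ) → (Fin m → ℝ) → (Fin m → ℝ))
    (hf : ContDiff ℝ (⊤ : ℕ∞) (Function.uncurry f))
    (hfb : ∀ n : ℕ, ∃ C : ℝ, ∀ zw : (Fin m → ℝ) × (Fin m → ℝ),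
      ‖iteratedFDeriv ℝ n (Function.uncurry f) zw‖ ≤ C)
    (ξ : ℝ) (hξ : ξ ∈ Set.Icc t₀ (t₀ + τ)) (η : Fin m → ℝ)
    (t : ℝ) (ht : t ∈ Set.Icc ξ (t₀ + τ))
    (Y : ContinuousMap (Set.Icc (t₀ - τ) t₀) (Fin m → ℝ) → ℝ → Fin m → ℝ)
    (hY : ∀ ψ : ContinuousMap (Set.Icc (t₀ - τ) t₀) (Fin m → ℝ), Y ψ ξ = η ∧
      ∀ r ∈ Set.Icc t₀ (t₀ + τ),
        HasDerivWithinAt (Y ψ)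
          (f (Y ψ r)
            (if hr : r - τ ∈ Set.Icc (t₀ - τ) t₀ then ψ ⟨r - τ, hr⟩ else 0))
          (Set.Icc t₀ (t₀ + τ)) r) :
    ∀ φ : ContinuousMap (Set.Icc (t₀ - τ) t₀) (Fin m → ℝ),
      ∃ Φ : ℝ → ℝ → ((Fin m → ℝ) →L[ℝ] (Fin m → ℝ)),
        (∀ r ∈ Set.Icc t₀ (t₀ + τ),
          Φ r r = ContinuousLinearMap.id ℝ (Fin m → ℝ) ∧
          ∀ u ∈ Set.Icc t₀ (t₀ + τ),
            HasDerivWithinAt (fun v => Φ v r)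
              ((fderiv ℝ
                (fun z => f z
                  (if hu : u - τ ∈ Set.Icc (t₀ - τ) t₀ then φ ⟨u - τ, hu⟩ else 0))
                (Y φ u)).comp (Φ u r))
              (Set.Icc t₀ (t₀ + τ)) u) ∧
        ∃ L : ContinuousMap (Set.Icc (t₀ - τ) t₀) (Fin m → ℝ) →L[ℝ] (Fin m → ℝ),
          HasFDerivAt (fun ψ => Y ψ t) L φ ∧
          ∀ δφ : ContinuousMap (Set.Icc (t₀ - τ) t₀) (Fin m → ℝ),
            L δφ = ∫ ζ in (ξ - τ)..(t - τ),
              (Φ t (ζ + τ))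
                ((fderiv ℝ (fun w => f (Y φ (ζ + τ)) w)
                  (if hζ : ζ ∈ Set.Icc (t₀ - τ) t₀ then φ ⟨ζ, hζ⟩ else 0))
                  (if hζ : ζ ∈ Set.Icc (t₀ - τ) t₀ then δφ ⟨ζ, hζ⟩ else 0)) := by
  intro φ
  simp only [← evalExtendByZero_apply] at hY ⊢
  set W := fun u => evalExtendByZero (E := Fin m → ℝ) (t₀ - τ) t₀ (u - τ)
  have hYc : ∀ ψ, IsIntegralCurveOn (Y ψ) (fun u y => f y (W u ψ)) (Icc t₀ (t₀ + τ)) :=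
    fun ψ => (hY ψ).2
  have hsub : Icc ξ t ⊆ Icc t₀ (t₀ + τ) := Icc_subset_Icc hξ.1 ht.2
  have hWc : ∀ ψ, ContinuousOn (fun u => W u ψ) (Icc t₀ (t₀ + τ)) := fun ψ =>
    (continuousOn_evalExtendByZero ψ).comp (continuousOn_id.sub continuousOn_const)
      fun u hu => ⟨by linarith [hu.1], by linarith [hu.2]⟩
  have hfd : Differentiable ℝ (Function.uncurry f) := hf.differentiable (by simp)
  obtain ⟨⟨K, hK⟩, ⟨C, hC⟩⟩ := exists_lipschitzWith_of_norm_iteratedFDeriv_le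
    (hf.of_le (WithTop.coe_le_coe.2 le_top)) (hfb 1) (hfb 2)
  obtain ⟨R, S, hR, hS, hRS⟩ := exists_fundamentalSolution (hξ.1.trans hξ.2)
    ((hYc φ).continuousOn.fderiv_apply_left hfd hC.continuous (hWc φ))
  obtain ⟨L, hL, hLeq⟩ := exists_hasFDerivAt_apply_eq_integral hfd hK hC
    (fun u => norm_evalExtendByZero_le _) (fun ψ => (hWc ψ).mono hsub)
    (fun ψ => (hYc ψ).mono hsub) (fun ψ => (hY ψ).1.trans (hY φ).1.symm) (hR.mono hsub)
    (hS.mono hsub) (fun u hu => hRS u (hsub hu)) ht.1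
  refine ⟨fun v r => (R v).comp (S r), fun r hr => ⟨hRS r hr, fun u hu => ?_⟩, L, hL,
    fun δ => ?_⟩
  · simpa [ContinuousLinearMap.comp_assoc] using
      (hR u hu).clm_comp (hasDerivWithinAt_const u _ (S r))
  · have hshift := intervalIntegral.integral_comp_add_right (a := ξ - τ) (b := t - τ)
      (fun u => ((R t).comp (S u)) (fderiv ℝ (fun w => f (Y φ u) w) (W u φ) (W u δ))) τ
    simp only [W, add_sub_cancel_right, sub_add_cancel] at hshift
    rw [hLeq, ← hshift]

/-- Fréchet differentiability of the solution of the local delay problem with respect to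
the history: fix `ξ ∈ [t₀, t₀+τ]`, `η ∈ ℝ^m` and `t ∈ [ξ, t₀+τ]`.  The map
`F : C([t₀−τ, t₀], ℝ^m) → ℝ^m` (sup norm), `F(φ) = y(t; ξ, η, φ)`, is Fréchet
differentiable at every continuous `φ`, with derivative the bounded linear map
`δφ ↦ ∫_{ξ−τ}^{t−τ} Φ_φ(t, ζ+τ) F₂(y(ζ+τ; ξ, η, φ), φ(ζ)) δφ(ζ) dζ`, where
`Φ_φ(·, r)` solves `Φ̇(t, r) = F₁(y(t; ξ, η, φ), φ(t−τ)) Φ(t, r)`, `Φ(r, r) = I`.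
Histories are elements of `C([t₀−τ, t₀], ℝ^m)`, extended by `0` outside `[t₀−τ, t₀]`
(the extension is irrelevant, since only values inside the interval are ever used). -/
theorem stmt15
    (m : ℕ) (hm : 1 ≤ m) (τ t₀ : ℝ) (hτ : 0 < τ)
    (f : (Fin m → ℝ) → (Fin m → ℝ) → (Fin m → ℝ))
    (hf : ContDiff ℝ (⊤ : ℕ∞) (Function.uncurry f))
    (hfb : ∀ n : ℕ, ∃ C : ℝ, ∀ zw : (Fin m → ℝ) × (Fin m → ℝ),
      ‖iteratedFDeriv ℝ n (Function.uncurry f) zw‖ ≤ C)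
    (ξ : ℝ) (hξ : ξ ∈ Set.Icc t₀ (t₀ + τ)) (η : Fin m → ℝ)
    (t : ℝ) (ht : t ∈ Set.Icc ξ (t₀ + τ))
    (Y : ContinuousMap (Set.Icc (t₀ - τ) t₀) (Fin m → ℝ) → ℝ → Fin m → ℝ)
    (hY : ∀ ψ : ContinuousMap (Set.Icc (t₀ - τ) t₀) (Fin m → ℝ), Y ψ ξ = η ∧
      ∀ r ∈ Set.Icc t₀ (t₀ + τ),
        HasDerivWithinAt (Y ψ)
          (f (Y ψ r)
            (if hr : r - τ ∈ Set.Icc (t₀ - τ) t₀ then ψ ⟨r - τ, hr⟩ else 0))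
          (Set.Icc t₀ (t₀ + τ)) r) :
    ∀ φ : ContinuousMap (Set.Icc (t₀ - τ) t₀) (Fin m → ℝ),
      ∃ Φ : ℝ → ℝ → ((Fin m → ℝ) →L[ℝ] (Fin m → ℝ)),
        (∀ r ∈ Set.Icc t₀ (t₀ + τ),
          Φ r r = ContinuousLinearMap.id ℝ (Fin m → ℝ) ∧
          ∀ u ∈ Set.Icc t₀ (t₀ + τ),
            HasDerivWithinAt (fun v => Φ v r)
              ((fderiv ℝ
                (fun z => f z
                  (if hu : u - τ ∈ Set.Icc (t₀ - τ) t₀ then φ ⟨u - τ, hu⟩ else 0))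
                (Y φ u)).comp (Φ u r))
              (Set.Icc t₀ (t₀ + τ)) u) ∧
        ∃ L : ContinuousMap (Set.Icc (t₀ - τ) t₀) (Fin m → ℝ) →L[ℝ] (Fin m → ℝ),
          HasFDerivAt (fun ψ => Y ψ t) L φ ∧
          ∀ δφ : ContinuousMap (Set.Icc (t₀ - τ) t₀) (Fin m → ℝ),
            L δφ = ∫ ζ in (ξ - τ)..(t - τ),
              (Φ t (ζ + τ))
                ((fderiv ℝ (fun w => f (Y φ (ζ + τ)) w)
                  (if hζ : ζ ∈ Set.Icc (t₀ - τ) t₀ then φ ⟨ζ, hζ⟩ else 0))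
                  (if hζ : ζ ∈ Set.Icc (t₀ - τ) t₀ then δφ ⟨ζ, hζ⟩ else 0)) :=
  stmt15_general m τ t₀ f hf hfb ξ hξ η t ht Y hY
end
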